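/- arXiv:2407.11228 — 5 statements merged into one kernel-verified Lean document; each statement's English description precedes it below -/
import Mathlib

section
/- Let m₀ ∈ [0,1], a ∈ [0,1], and τ, λ > 0 with τλ < 1. Then there exists a unique m ∈ [0,1] satisfying m = m₀ − τ λ a m (1 − m). -/
/-- Unique solvability of the implicit Euler step for the ECM equation:
there is a unique `m ∈ [0,1]` with `m = m₀ − τλ a m(1 − m)` when `τλ < 1`. -/
theorem implicit_euler_step_unique (m₀ a τ lam : ℝ)
    (hm₀ : m₀ ∈ Set.Icc (0 : ℝ) 1) (ha : a ∈ Set.Icc (0 : ℝ) 1)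
    (hτ : 0 < τ) (hlam : 0 < lam) (hsmall : τ * lam < 1) :
    ∃! m : ℝ, m ∈ Set.Icc (0 : ℝ) 1 ∧ m = m₀ - τ * lam * a * m * (1 - m) := by
  obtain ⟨hm0, hm1⟩ := hm₀
  obtain ⟨ha0, ha1⟩ := ha
  set c := τ * lam * a with hc
  have hc0 : 0 ≤ c := by positivity
  have hc1 : c < 1 := by
    calc c ≤ τ * lam * 1 := by
            apply mul_le_mul_of_nonneg_left ha1 (by positivity)
    _ = τ * lam := by ring
    _ < 1 := hsmall
  set f : ℝ → ℝ := fun x => x + c * x * (1 - x) with hf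
  have hcont : ContinuousOn f (Set.Icc 0 1) := by fun_prop
  have hsub := intermediate_value_Icc (by norm_num : (0:ℝ) ≤ 1) hcont
  have hf0 : f 0 = 0 := by simp [hf]
  have hf1 : f 1 = 1 := by simp [hf]
  have hmem : m₀ ∈ Set.Icc (f 0) (f 1) := by
    rw [hf0, hf1]; exact ⟨hm0, hm1⟩
  obtain ⟨m, hmIcc, hfm⟩ := hsub hmem
  refine ⟨m, ⟨hmIcc, ?_⟩, ?_⟩
  · have : m + c * m * (1 - m) = m₀ := hfm
    linarith
  · rintro y ⟨⟨hy0, hy1⟩, hy⟩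
    obtain ⟨hm0', hm1'⟩ := hmIcc
    have hm' : m + c * m * (1 - m) = m₀ := hfm
    have key : (y - m) * (1 + c - c * (y + m)) = 0 := by linarith [hy, hm', mul_self_nonneg (y-m)]
    have hpos : 0 < 1 + c - c * (y + m) := by nlinarith
    have := mul_eq_zero.mp key
    rcases this with h | h
    · linarith
    · linarith
end

section
/- Let τ ∈ (0,1], λ > 0 and C > 0. Let (a_k)_{k≥1} be a sequence of reals with 1/(1 + e^C) ≤ a_k ≤ 1/(1 + e^{−C}) for all k, and let (m_k)_{k≥0} be a sequence with m_k ∈ [0,1] for all k, m₀ ∈ [τ, 1 − τ], and m_k = m_{k−1} − τ λ a_k m_k (1 − m_k) for all k ≥ 1. Define u_k := a_k (1 − m_k) and ρ_k := u_k + m_k. Then for every k ≥ 1: (i) τ/(1 + τλ)^k ≤ m_k ≤ 1 − τ; (ii) τ/(1 + e^C) ≤ u_k ≤ 1 − τ/(1 + τλ)^k; (iii) τ/(1 + e^C) + τ/(1 + τλ)^k ≤ ρ_k ≤ 1 − τ(1 − 1/(1 + e^{−C})). In particular 0 < u_k < 1, 0 < m_k < 1 and 0 < ρ_k < 1 for all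 k ≥ 1. -/
/-!
The implicit step `y = x - c y (1 - y)` with `c ≥ 0` and `y ∈ [0, 1]` gives `y ≤ x ≤ (1 + c) y`.
With `c = τ λ a_k ≤ τ λ`, the ECM iterates therefore decrease, so `m_k ≤ m₀ ≤ 1 - τ`, and lose at
most a factor `1 + τ λ` per step, so `m_k ≥ τ / (1 + τ λ)^k`. The bounds on `u_k = a_k (1 - m_k)`
and `ρ_k = 1 - (1 - a_k)(1 - m_k)` follow from these and from `a_k` lying strictly inside `(0, 1)`.
-/

open Set

section ImplicitLogisticStep

variable {x y c : ℝ}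

theorem le_of_implicit_logistic_step (hc : 0 ≤ c) (hy : y ∈ Icc (0 : ℝ) 1)
    (h : y = x - c * y * (1 - y)) : y ≤ x := by
  nlinarith [mul_nonneg (mul_nonneg hc hy.1) (sub_nonneg.2 hy.2)]

theorem le_one_add_mul_of_implicit_logistic_step (hc : 0 ≤ c) (hy : y ∈ Icc (0 : ℝ) 1)
    (h : y = x - c * y * (1 - y)) : x ≤ (1 + c) * y := by
  nlinarith [mul_nonneg (mul_nonneg hc hy.1) hy.1]

end ImplicitLogisticStep

theorem div_pow_le_of_le_mul_succ {m : ℕ → ℝ} {q : ℝ} (hq : 0 < q)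
    (h : ∀ k, m k ≤ q * m (k + 1)) (k : ℕ) : m 0 / q ^ k ≤ m k := by
  induction k with
  | zero => simp
  | succ k ih =>
    rw [pow_succ, ← div_div, div_le_iff₀ hq, mul_comm]
    exact ih.trans (h k)

theorem implicit_logistic_iterates_mem_Icc {m c : ℕ → ℝ} {c₀ : ℝ}
    (hc : ∀ k, c k ∈ Icc 0 c₀) (hm : ∀ k, m k ∈ Icc (0 : ℝ) 1)
    (hstep : ∀ k, m (k + 1) = m k - c k * m (k + 1) * (1 - m (k + 1))) (k : ℕ) :
    m k ∈ Icc (m 0 / (1 + c₀) ^ k) (m 0) := by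
  have hgrowth (k : ℕ) : m k ≤ (1 + c₀) * m (k + 1) :=
    (le_one_add_mul_of_implicit_logistic_step (hc k).1 (hm _) (hstep k)).trans <|
      mul_le_mul_of_nonneg_right (add_le_add_right (hc k).2 1) (hm _).1
  have hanti : Antitone m := antitone_nat_of_succ_le fun k =>
    le_of_implicit_logistic_step (hc k).1 (hm _) (hstep k)
  have hc₀ : 0 ≤ c₀ := (hc 0).1.trans (hc 0).2
  exact ⟨div_pow_le_of_le_mul_succ (by linarith) hgrowth k, hanti k.zero_le⟩

section DensityBounds

variable {a m τ : ℝ}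

theorem mul_le_mul_one_sub_of_le_one_sub {a₀ : ℝ} (ha₀ : 0 ≤ a₀) (ha : a₀ ≤ a) (hτ : 0 ≤ τ)
    (hm : m ≤ 1 - τ) : τ * a₀ ≤ a * (1 - m) := by
  nlinarith [mul_le_mul ha (le_sub_comm.1 hm) hτ (ha₀.trans ha)]

theorem mul_one_sub_add_le_one_sub {A : ℝ} (ha : a ≤ A) (hA : A ≤ 1) (hτ : 0 ≤ τ)
    (hm : m ≤ 1 - τ) : a * (1 - m) + m ≤ 1 - τ * (1 - A) := by
  nlinarith [mul_le_mul (sub_le_sub_left ha 1) (le_sub_comm.1 hm) hτ (by linarith : 0 ≤ 1 - a)]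

end DensityBounds

theorem discrete_box_constraints_general (τ lam C : ℝ)
    (hτ0 : 0 < τ) (hlam : 0 < lam)
    (a m : ℕ → ℝ)
    (ha : ∀ k ≥ 1, 1 / (1 + Real.exp C) ≤ a k ∧ a k ≤ 1 / (1 + Real.exp (-C)))
    (hm : ∀ k, m k ∈ Set.Icc (0 : ℝ) 1)
    (hm0 : m 0 ∈ Set.Icc τ (1 - τ))
    (hrec : ∀ k ≥ 1, m k = m (k - 1) - τ * lam * a k * m k * (1 - m k)) :
    ∀ k ≥ 1,
      (τ / (1 + τ * lam) ^ k ≤ m k ∧ m k ≤ 1 - τ) ∧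
      (τ / (1 + Real.exp C) ≤ a k * (1 - m k) ∧
        a k * (1 - m k) ≤ 1 - τ / (1 + τ * lam) ^ k) ∧
      (τ / (1 + Real.exp C) + τ / (1 + τ * lam) ^ k ≤ a k * (1 - m k) + m k ∧
        a k * (1 - m k) + m k ≤ 1 - τ * (1 - 1 / (1 + Real.exp (-C)))) ∧
      (0 < a k * (1 - m k) ∧ a k * (1 - m k) < 1) ∧
      (0 < m k ∧ m k < 1) ∧
      (0 < a k * (1 - m k) + m k ∧ a k * (1 - m k) + m k < 1) := by
  have hA₀ : 0 < 1 / (1 + Real.exp C) := by positivity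
  have hA₁ : 1 / (1 + Real.exp (-C)) < 1 :=
    (div_lt_one (by positivity)).2 (by linarith [Real.exp_pos (-C)])
  have ha_le_one (k : ℕ) (hk : k ≥ 1) : a k ≤ 1 := (ha k hk).2.trans hA₁.le
  have hc (k : ℕ) : τ * lam * a (k + 1) ∈ Icc 0 (τ * lam) := by
    have := hA₀.trans_le (ha _ (Nat.le_add_left 1 k)).1
    exact ⟨by positivity,
      mul_le_of_le_one_right (by positivity) (ha_le_one _ (Nat.le_add_left 1 k))⟩
  have hstep (k : ℕ) := hrec (k + 1) (Nat.le_add_left 1 k)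
  simp only [Nat.add_sub_cancel] at hstep
  intro k hk
  obtain ⟨hmk_lower, hmk_upper⟩ := implicit_logistic_iterates_mem_Icc hc hm hstep k
  replace hmk_lower : τ / (1 + τ * lam) ^ k ≤ m k :=
    (div_le_div_of_nonneg_right hm0.1 (by positivity)).trans hmk_lower
  replace hmk_upper : m k ≤ 1 - τ := hmk_upper.trans hm0.2
  have hu_lower : τ / (1 + Real.exp C) ≤ a k * (1 - m k) := by
    simpa only [mul_one_div] using
      mul_le_mul_one_sub_of_le_one_sub hA₀.le (ha k hk).1 hτ0.le hmk_upper
  have hu_upper : a k * (1 - m k) ≤ 1 - m k :=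
    mul_le_of_le_one_left (sub_nonneg.2 (hm k).2) (ha_le_one k hk)
  have hρ_upper := mul_one_sub_add_le_one_sub (ha k hk).2 hA₁.le hτ0.le hmk_upper
  have hpos : 0 < τ / (1 + τ * lam) ^ k := by positivity
  have hposC : 0 < τ / (1 + Real.exp C) := by positivity
  have hgap : 0 < τ * (1 - 1 / (1 + Real.exp (-C))) := mul_pos hτ0 (by linarith)
  refine ⟨⟨hmk_lower, hmk_upper⟩, ⟨hu_lower, by linarith⟩, ⟨by linarith, hρ_upper⟩,
    ⟨by linarith, by linarith⟩, ⟨by linarith, by linarith⟩, ⟨by linarith, by linarith⟩⟩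

/-- Strict uniform box constraints for the implicit Euler iterates
(Theorem 2.5 of the paper), in sequence form. -/
theorem discrete_box_constraints (τ lam C : ℝ)
    (hτ0 : 0 < τ) (hτ1 : τ ≤ 1) (hlam : 0 < lam) (hC : 0 < C)
    (a m : ℕ → ℝ)
    (ha : ∀ k ≥ 1, 1 / (1 + Real.exp C) ≤ a k ∧ a k ≤ 1 / (1 + Real.exp (-C)))
    (hm : ∀ k, m k ∈ Set.Icc (0 : ℝ) 1)
    (hm0 : m 0 ∈ Set.Icc τ (1 - τ))
    (hrec : ∀ k ≥ 1, m k = m (k - 1) - τ * lam * a k * m k * (1 - m k)) :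
    ∀ k ≥ 1,
      (τ / (1 + τ * lam) ^ k ≤ m k ∧ m k ≤ 1 - τ) ∧
      (τ / (1 + Real.exp C) ≤ a k * (1 - m k) ∧
        a k * (1 - m k) ≤ 1 - τ / (1 + τ * lam) ^ k) ∧
      (τ / (1 + Real.exp C) + τ / (1 + τ * lam) ^ k ≤ a k * (1 - m k) + m k ∧
        a k * (1 - m k) + m k ≤ 1 - τ * (1 - 1 / (1 + Real.exp (-C)))) ∧
      (0 < a k * (1 - m k) ∧ a k * (1 - m k) < 1) ∧
      (0 < m k ∧ m k < 1) ∧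
      (0 < a k * (1 - m k) + m k ∧ a k * (1 - m k) + m k < 1) :=
  discrete_box_constraints_general τ lam C hτ0 hlam a m ha hm hm0 hrec
end

section
/- Let V be a real inner product space, let u, m be real numbers with u > 0 and u + m < 1, and let p, q ∈ V. Then u(1 − u − m)·‖p/u + (p + q)/(1 − u − m)‖² ≥ ‖p‖² − ‖q‖². -/
/-! Put `b = 1 - u - m`. Expanding, `u b ‖p/u + (p+q)/b‖² = (b/u)‖p‖² + 2⟪p, p+q⟫ + (u/b)‖p+q‖²`,
and the cross term alone already dominates: `2⟪p, p+q⟫ = ‖p‖² + ‖p+q‖² - ‖q‖² ≥ ‖p‖² - ‖q‖²`. -/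

section

variable {V : Type*} [NormedAddCommGroup V] [InnerProductSpace ℝ V]

theorem mul_mul_norm_inv_smul_add_inv_smul_sq {a b : ℝ} (ha : a ≠ 0) (hb : b ≠ 0) (x y : V) :
    a * b * ‖a⁻¹ • x + b⁻¹ • y‖ ^ 2 =
      b / a * ‖x‖ ^ 2 + 2 * inner ℝ x y + a / b * ‖y‖ ^ 2 := by
  rw [norm_add_sq_real, norm_smul, norm_smul, real_inner_smul_left, real_inner_smul_right,
    mul_pow, mul_pow, Real.norm_eq_abs, Real.norm_eq_abs, sq_abs, sq_abs]
  field_simp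

theorem two_mul_inner_le_mul_mul_norm_inv_smul_add_inv_smul_sq {a b : ℝ} (hab : 0 < a * b)
    (x y : V) : 2 * inner ℝ x y ≤ a * b * ‖a⁻¹ • x + b⁻¹ • y‖ ^ 2 := by
  have ha : a ≠ 0 := left_ne_zero_of_mul hab.ne'
  have hb : b ≠ 0 := right_ne_zero_of_mul hab.ne'
  have hba : 0 ≤ b / a := by
    rw [show b / a = a * b / a ^ 2 by field_simp]; positivity
  have hab' : 0 ≤ a / b := by
    rw [show a / b = a * b / b ^ 2 by field_simp]; positivity
  rw [mul_mul_norm_inv_smul_add_inv_smul_sq ha hb]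
  linarith [mul_nonneg hba (sq_nonneg ‖x‖), mul_nonneg hab' (sq_nonneg ‖y‖)]

theorem two_mul_inner_self_add_eq (x y : V) :
    2 * inner ℝ x (x + y) = ‖x‖ ^ 2 + ‖x + y‖ ^ 2 - ‖y‖ ^ 2 := by
  rw [norm_add_sq_real, inner_add_right, real_inner_self_eq_norm_sq]
  ring

theorem norm_sq_sub_norm_sq_le_two_mul_inner_self_add (x y : V) :
    ‖x‖ ^ 2 - ‖y‖ ^ 2 ≤ 2 * inner ℝ x (x + y) := by
  rw [two_mul_inner_self_add_eq]
  linarith [sq_nonneg ‖x + y‖]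

end

/-- Pointwise dissipation inequality: with `p = ∇u`, `q = ∇m` and
`∇w = p/u + (p+q)/(1−u−m)`, the dissipation density `u(1−u−m)|∇w|²`
dominates `|p|² − |q|²`. -/
theorem dissipation_dominates {V : Type*} [NormedAddCommGroup V]
    [InnerProductSpace ℝ V] (u m : ℝ) (hu : 0 < u) (hum : u + m < 1)
    (p q : V) :
    u * (1 - u - m) * ‖(1 / u) • p + (1 / (1 - u - m)) • (p + q)‖ ^ 2 ≥
      ‖p‖ ^ 2 - ‖q‖ ^ 2 := by
  have hb : 0 < 1 - u - m := by linarith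
  simp only [one_div]
  calc ‖p‖ ^ 2 - ‖q‖ ^ 2 ≤ 2 * inner ℝ p (p + q) :=
        norm_sq_sub_norm_sq_le_two_mul_inner_self_add p q
    _ ≤ _ := two_mul_inner_le_mul_mul_norm_inv_smul_add_inv_smul_sq (mul_pos hu hb) p (p + q)
end

section
/- Let a, b : ℕ → ℝ be sequences of nonnegative reals, let c ≥ 0 and ℓ ≥ 1, and suppose a_k ≤ a_{k−1} + c·b_k for all k ≥ 1. Define φ_k := ∑_{i=kℓ+1}^{(k+1)ℓ} b_i². Then for every n ≥ 1, a_{nℓ}² ≤ 2ⁿ·a_0² + 2·c²·ℓ·∑_{k=0}^{n−1} 2^{n−1−k}·φ_k. -/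
/-!
Telescoping the one-step inequality over a window of length `ℓ` gives
`a_{(k+1)ℓ} ≤ a_{kℓ} + c ∑_{window} b_i`; squaring with `(x + y)² ≤ 2x² + 2y²` and Cauchy–Schwarz
`(∑_{window} b_i)² ≤ ℓ φ_k` turns this into `a_{(k+1)ℓ}² ≤ 2 a_{kℓ}² + 2c²ℓ φ_k`, and unrolling this
linear recursion in `k` is a discrete Grönwall inequality.
-/

open Finset

theorem le_add_sum_Icc_of_le_add {α : Type*} [AddCommMonoid α] [PartialOrder α]
    [IsOrderedAddMonoid α] {a d : ℕ → α} (h : ∀ k, a (k + 1) ≤ a k + d (k + 1))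
    {s m : ℕ} (hsm : s ≤ m) : a m ≤ a s + ∑ i ∈ Icc (s + 1) m, d i := by
  induction m, hsm using Nat.le_induction with
  | base => simp
  | succ m hsm ih =>
    rw [sum_Icc_succ_top (by omega), ← add_assoc]
    exact (h m).trans (by gcongr)

theorem sq_le_of_le_add_mul_sum {ι : Type*} {x y c : ℝ}
    {s : Finset ι} {b : ι → ℝ} (hx : 0 ≤ x) (h : x ≤ y + c * ∑ i ∈ s, b i) :
    x ^ 2 ≤ 2 * y ^ 2 + 2 * c ^ 2 * #s * ∑ i ∈ s, b i ^ 2 := by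
  have hcs : (c * ∑ i ∈ s, b i) ^ 2 ≤ c ^ 2 * (#s * ∑ i ∈ s, b i ^ 2) := by
    rw [mul_pow]
    exact mul_le_mul_of_nonneg_left sq_sum_le_card_mul_sum_sq (sq_nonneg c)
  linarith [(pow_le_pow_left₀ hx h 2).trans add_sq_le]

theorem le_pow_mul_add_sum_of_le_mul_add {u f : ℕ → ℝ} {r C : ℝ} (hr : 0 ≤ r)
    (h : ∀ k, u (k + 1) ≤ r * u k + C * f k) (n : ℕ) :
    u n ≤ r ^ n * u 0 + C * ∑ k ∈ range n, r ^ (n - 1 - k) * f k := by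
  induction n with
  | zero => simp
  | succ n ih =>
    have hsum : ∑ k ∈ range (n + 1), r ^ (n - k) * f k
        = r * ∑ k ∈ range n, r ^ (n - 1 - k) * f k + f n := by
      rw [sum_range_succ, Nat.sub_self, pow_zero, one_mul, mul_sum]
      congr 1
      refine sum_congr rfl fun k hk => ?_
      rw [show n - k = n - 1 - k + 1 by grind, pow_succ]
      ring
    calc u (n + 1) ≤ r * u n + C * f n := h n
      _ ≤ r * (r ^ n * u 0 + C * ∑ k ∈ range n, r ^ (n - 1 - k) * f k) + C * f n := by
        gcongr
      _ = r ^ (n + 1) * u 0 + C * ∑ k ∈ range (n + 1), r ^ (n + 1 - 1 - k) * f k := by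
        rw [Nat.add_sub_cancel, hsum]
        ring

theorem iterated_window_estimate_general (a b : ℕ → ℝ)
    (ha : ∀ k, 0 ≤ a k)
    (c : ℝ) (l : ℕ)
    (hrec : ∀ k ≥ 1, a k ≤ a (k - 1) + c * b k) :
    ∀ n : ℕ, 1 ≤ n →
      a (n * l) ^ 2 ≤
        (2 : ℝ) ^ n * a 0 ^ 2 +
          2 * c ^ 2 * (l : ℝ) *
            ∑ k ∈ Finset.range n, (2 : ℝ) ^ (n - 1 - k) *
              ∑ i ∈ Finset.Icc (k * l + 1) ((k + 1) * l), b i ^ 2 := by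
  intro n _
  have hstep : ∀ k, a (k + 1) ≤ a k + c * b (k + 1) := fun k => hrec (k + 1) (by omega)
  have hwindow : ∀ k, a ((k + 1) * l) ^ 2 ≤
      2 * a (k * l) ^ 2 + 2 * c ^ 2 * l * ∑ i ∈ Icc (k * l + 1) ((k + 1) * l), b i ^ 2 := by
    intro k
    have hcard : #(Icc (k * l + 1) ((k + 1) * l)) = l := by
      rw [Nat.card_Icc, add_one_mul]
      omega
    have hle : a ((k + 1) * l) ≤ a (k * l) + c * ∑ i ∈ Icc (k * l + 1) ((k + 1) * l), b i := by
      rw [mul_sum]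
      exact le_add_sum_Icc_of_le_add hstep (Nat.mul_le_mul_right l k.le_succ)
    simpa [hcard] using sq_le_of_le_add_mul_sum (ha _) hle
  simpa using le_pow_mul_add_sum_of_le_mul_add (u := fun k => a (k * l) ^ 2) zero_le_two hwindow n

/-- Iterated conditional estimate for the ECM gradient (Lemma 2.7):
`a_{nℓ}² ≤ 2ⁿ a_0² + 2c²ℓ ∑_{k=0}^{n−1} 2^{n−1−k} φ_k` with
`φ_k = ∑_{i=kℓ+1}^{(k+1)ℓ} b_i²`. -/
theorem iterated_window_estimate (a b : ℕ → ℝ)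
    (ha : ∀ k, 0 ≤ a k) (hb : ∀ k, 0 ≤ b k)
    (c : ℝ) (hc : 0 ≤ c) (l : ℕ) (hl : 1 ≤ l)
    (hrec : ∀ k ≥ 1, a k ≤ a (k - 1) + c * b k) :
    ∀ n : ℕ, 1 ≤ n →
      a (n * l) ^ 2 ≤
        (2 : ℝ) ^ n * a 0 ^ 2 +
          2 * c ^ 2 * (l : ℝ) *
            ∑ k ∈ Finset.range n, (2 : ℝ) ^ (n - 1 - k) *
              ∑ i ∈ Finset.Icc (k * l + 1) ((k + 1) * l), b i ^ 2 :=
  iterated_window_estimate_general a b ha c l hrec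
end

section
/- Let τ, λ ≥ 0, a ∈ [0,1], and let m₀, m ∈ [0,1] satisfy m = m₀ − τ λ a m (1 − m). Then m ≤ m₀ and m·(1 + τλ) ≥ m₀; in particular, if m₀ ≥ τ then m ≥ τ/(1 + τλ). -/
/-- One-step monotonicity and lower bound for the implicit Euler step of the
ECM equation `m = m₀ − τλ a m(1 − m)`. -/
theorem implicit_euler_step_bounds (τ lam a m₀ m : ℝ)
    (hτ : 0 ≤ τ) (hlam : 0 ≤ lam)
    (ha : a ∈ Set.Icc (0 : ℝ) 1)
    (hm₀ : m₀ ∈ Set.Icc (0 : ℝ) 1) (hm : m ∈ Set.Icc (0 : ℝ) 1)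
    (heq : m = m₀ - τ * lam * a * m * (1 - m)) :
    m ≤ m₀ ∧ m₀ ≤ m * (1 + τ * lam) ∧ (τ ≤ m₀ → τ / (1 + τ * lam) ≤ m) := by
  obtain ⟨ha0, ha1⟩ := ha
  obtain ⟨hm0, hm1⟩ := hm
  have hnn : 0 ≤ τ * lam * a * m * (1 - m) := by
    have : 0 ≤ 1 - m := by linarith
    positivity
  have h1 : m ≤ m₀ := by nlinarith
  have key : 0 ≤ 1 - a * (1 - m) := by nlinarith
  have h2 : m₀ ≤ m * (1 + τ * lam) := by
    nlinarith [mul_nonneg (mul_nonneg (mul_nonneg hτ hlam) hm0) key]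
  refine ⟨h1, h2, fun hτm₀ => ?_⟩
  have hpos : 0 < 1 + τ * lam := by positivity
  rw [div_le_iff₀ hpos]
  linarith
end
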